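/- arXiv:2512.08817 — 2 statements merged into one kernel-verified Lean document; each statement's English description precedes it below -/
import Mathlib

section
/- A sorted word L (over the r=4 alphabet) has no descents if and only if, for each i ∈ {1,2,3}, the sequence L^{(i)} — obtained by listing w^{(i)} for each letter w of L with |w| ≥ i, in the order the letters occur — is weakly decreasing. -/
/-!
Both sides are conditions on adjacent letters. As `L` is sorted by size, its letters of size
at least `i` form a suffix of `L`, so consecutive entries of `L^{(i)}` come from consecutive
letters `v, w` of `L` with `i ≤ |v|`. It therefore suffices that for letters with `|v| ≤ |w|`
the pair `(v, w)` is not a descent iff `w^{(i)} ≤ v^{(i)}` for all `i ≤ |v|`, which is a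
finite check over pairs of the fourteen letters.
-/

/-- The ground set `{1, 2, 3, 4}`. -/
def U4 : Finset ℕ := {1, 2, 3, 4}

/-- A letter of the `r = 4` alphabet: a nonempty proper subset of `{1,2,3,4}`
(hence of size `1`, `2` or `3`). -/
def IsLetter4 (s : Finset ℕ) : Prop := s ⊆ U4 ∧ s.Nonempty ∧ s ≠ U4

/-- `nth s i` is the `i`-th smallest element of `s` (1-indexed), i.e. `s^{(i)}`. -/
def nth (s : Finset ℕ) (i : ℕ) : ℕ := (s.sort (· ≤ ·)).getD (i - 1) 0

/-- The pair `(v, w)` (for letters with `|v| ≤ |w|`) is a descent.  Here a singleton `{a}`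
is the letter `a`, and `U4 \ {a}` is the barred letter `ā`. -/
def Descent4 (v w : Finset ℕ) : Prop :=
  (∃ a b : ℕ, v = {a} ∧ w = {b} ∧ a < b) ∨
  (∃ a b : ℕ, v = U4 \ {a} ∧ w = U4 \ {b} ∧ a > b) ∨
  (v = {1} ∧ w = U4 \ {1}) ∨
  (∃ a b c : ℕ, v = {a} ∧ w = {b, c} ∧ a < b ∧ b < c) ∨
  (∃ a b c : ℕ, v = {a, b} ∧ a ≠ b ∧ w = U4 \ {c} ∧
    ∀ x ∈ U4 \ ({a, b} : Finset ℕ), c < x) ∨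
  (∃ a₁ a₂ b₁ b₂ : ℕ, v = {a₁, a₂} ∧ a₁ < a₂ ∧ w = {b₁, b₂} ∧ b₁ < b₂ ∧
    (a₁ < b₁ ∨ a₂ < b₂))

/-- The sequence `L^{(i)}`: list the `i`-th smallest entry of each letter of `L` having at
least `i` elements, in order of occurrence. -/
def seqNth (L : List (Finset ℕ)) (i : ℕ) : List ℕ :=
  (L.filter fun w => i ≤ w.card).map fun w => nth w i

namespace List

variable {α : Type*} {R S : α → α → Prop}

theorem isChain_iff_of_pairwise {P : α → α → Prop} :
    ∀ {l : List α}, l.Pairwise P → (∀ a ∈ l, ∀ b ∈ l, P a b → (R a b ↔ S a b)) →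
      (IsChain R l ↔ IsChain S l)
  | [], _, _ => by simp
  | [_], _, _ => by simp
  | a :: b :: l, hP, H => by
    rw [isChain_cons_cons, isChain_cons_cons,
      isChain_iff_of_pairwise (pairwise_cons.mp hP).2
        fun x hx y hy => H x (by simp [hx]) y (by simp [hy]),
      H a (by simp) b (by simp) ((pairwise_cons.mp hP).1 b (by simp))]

theorem isChain_filter_iff {p : α → Bool} {l : List α} (hp : l.Pairwise fun a b => p a → p b) :
    IsChain R (l.filter p) ↔ IsChain (fun a b => p a → R a b) l := by
  induction l with
  | nil => simp
  | cons a l ih =>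
    obtain ⟨hhead, htail⟩ := pairwise_cons.mp hp
    by_cases ha : p a
    · have hall : ∀ b ∈ a :: l, p b := by
        simpa [ha] using fun b hb => hhead b hb ha
      rw [filter_eq_self.mpr hall]
      exact IsChain.iff_of_mem_imp fun b _ hb _ => by simp [hall b hb]
    · rw [filter_cons_of_neg ha, ih htail, isChain_cons]
      simp [ha]

theorem isChain_forall_iff {ι : Type*} {p : ι → Prop} {R : ι → α → α → Prop} {l : List α} :
    IsChain (fun a b => ∀ i, p i → R i a b) l ↔ ∀ i, p i → IsChain (R i) l := by
  simp only [isChain_iff_getElem]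
  exact ⟨fun h i hi n hn => h n hn i hi, fun h n hn i hi => h i hi n hn⟩

end List

theorem Finset.sort_eq_filter_range {s : Finset ℕ} {n : ℕ} (hs : s ⊆ range n) :
    s.sort (· ≤ ·) = (List.range n).filter (· ∈ s) := by
  refine List.Perm.eq_of_pairwise' (pairwise_sort _ _)
    ((List.pairwise_lt_range.imp le_of_lt).filter _) ?_
  refine (List.perm_ext_iff_of_nodup (sort_nodup _ _) (List.nodup_range.filter _)).mpr fun a => ?_
  simpa using fun ha => mem_range.mp (hs ha)

-- `Finset.sort` does not reduce in the kernel; this form of `nth` does, so `decide` can use it.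
lemma nth_eq_getD_filter_range {s : Finset ℕ} (hs : s ⊆ U4) (i : ℕ) :
    nth s i = ((List.range 5).filter (· ∈ s)).getD (i - 1) 0 := by
  rw [nth, Finset.sort_eq_filter_range (n := 5) (hs.trans (by decide))]

/-- `Descent4` with every witness confined to `U4`, which makes it decidable. -/
def Descent4Bounded (v w : Finset ℕ) : Prop :=
  (∃ a ∈ U4, ∃ b ∈ U4, v = {a} ∧ w = {b} ∧ a < b) ∨
  (∃ a ∈ U4, ∃ b ∈ U4, v = U4 \ {a} ∧ w = U4 \ {b} ∧ a > b) ∨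
  (v = {1} ∧ w = U4 \ {1}) ∨
  (∃ a ∈ U4, ∃ b ∈ U4, ∃ c ∈ U4, v = {a} ∧ w = {b, c} ∧ a < b ∧ b < c) ∨
  (∃ a ∈ U4, ∃ b ∈ U4, ∃ c ∈ U4, v = {a, b} ∧ a ≠ b ∧ w = U4 \ {c} ∧
    ∀ x ∈ U4 \ ({a, b} : Finset ℕ), c < x) ∨
  (∃ a₁ ∈ U4, ∃ a₂ ∈ U4, ∃ b₁ ∈ U4, ∃ b₂ ∈ U4, v = {a₁, a₂} ∧ a₁ < a₂ ∧ w = {b₁, b₂} ∧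
    b₁ < b₂ ∧ (a₁ < b₁ ∨ a₂ < b₂))

instance (v w : Finset ℕ) : Decidable (Descent4Bounded v w) := by
  unfold Descent4Bounded; infer_instance

lemma mem_U4_of_eq_sdiff {s : Finset ℕ} (hs : s ≠ U4) {a : ℕ} (h : s = U4 \ {a}) : a ∈ U4 := by
  by_contra ha
  exact hs (by rw [h, Finset.sdiff_singleton_eq_erase, Finset.erase_eq_self.mpr ha])

lemma descent4_iff_bounded {v w : Finset ℕ} (hv : IsLetter4 v) (hw : IsLetter4 w) :
    Descent4 v w ↔ Descent4Bounded v w := by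
  obtain ⟨hvU4, -, hvne⟩ := hv
  obtain ⟨hwU4, -, hwne⟩ := hw
  constructor
  · refine Or.imp ?_ (Or.imp ?_ (Or.imp id (Or.imp ?_ (Or.imp ?_ ?_))))
    · rintro ⟨a, b, rfl, rfl, h⟩
      exact ⟨a, hvU4 (by simp), b, hwU4 (by simp), rfl, rfl, h⟩
    · rintro ⟨a, b, hva, hwb, h⟩
      exact ⟨a, mem_U4_of_eq_sdiff hvne hva, b, mem_U4_of_eq_sdiff hwne hwb, hva, hwb, h⟩
    · rintro ⟨a, b, c, rfl, rfl, h⟩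
      exact ⟨a, hvU4 (by simp), b, hwU4 (by simp), c, hwU4 (by simp), rfl, rfl, h⟩
    · rintro ⟨a, b, c, rfl, hab, hwc, h⟩
      exact ⟨a, hvU4 (by simp), b, hvU4 (by simp), c, mem_U4_of_eq_sdiff hwne hwc,
        rfl, hab, hwc, h⟩
    · rintro ⟨a₁, a₂, b₁, b₂, rfl, ha, rfl, h⟩
      exact ⟨a₁, hvU4 (by simp), a₂, hvU4 (by simp), b₁, hwU4 (by simp), b₂, hwU4 (by simp),
        rfl, ha, rfl, h⟩
  · refine Or.imp ?_ (Or.imp ?_ (Or.imp id (Or.imp ?_ (Or.imp ?_ ?_))))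
    · rintro ⟨a, -, b, -, h⟩; exact ⟨a, b, h⟩
    · rintro ⟨a, -, b, -, h⟩; exact ⟨a, b, h⟩
    · rintro ⟨a, -, b, -, c, -, h⟩; exact ⟨a, b, c, h⟩
    · rintro ⟨a, -, b, -, c, -, h⟩; exact ⟨a, b, c, h⟩
    · rintro ⟨a₁, -, a₂, -, b₁, -, b₂, -, h⟩; exact ⟨a₁, a₂, b₁, b₂, h⟩

lemma not_descent4Bounded_iff_getD_le : ∀ v ∈ U4.powerset, ∀ w ∈ U4.powerset,
    v.Nonempty → v ≠ U4 → w.Nonempty → w ≠ U4 → v.card ≤ w.card →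
    (¬ Descent4Bounded v w ↔ ∀ i ∈ ({1, 2, 3} : Finset ℕ), i ≤ v.card →
      ((List.range 5).filter (· ∈ w)).getD (i - 1) 0 ≤
        ((List.range 5).filter (· ∈ v)).getD (i - 1) 0) := by
  decide

theorem not_descent4_iff_nth_le {v w : Finset ℕ} (hv : IsLetter4 v) (hw : IsLetter4 w)
    (hvw : v.card ≤ w.card) :
    ¬ Descent4 v w ↔ ∀ i ∈ ({1, 2, 3} : Finset ℕ), i ≤ v.card → nth w i ≤ nth v i := by
  simp only [descent4_iff_bounded hv hw, nth_eq_getD_filter_range hv.1,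
    nth_eq_getD_filter_range hw.1]
  exact not_descent4Bounded_iff_getD_le v (Finset.mem_powerset.mpr hv.1) w
    (Finset.mem_powerset.mpr hw.1) hv.2.1 hv.2.2 hw.2.1 hw.2.2 hvw

/-- a sorted word over the `r = 4` alphabet has no descents iff each of the
sequences `L^{(1)}, L^{(2)}, L^{(3)}` is weakly decreasing. -/
theorem stmt1 (L : List (Finset ℕ)) (hletters : ∀ w ∈ L, IsLetter4 w)
    (hsorted : L.Pairwise fun v w => v.card ≤ w.card) :
    L.Chain' (fun v w => ¬ Descent4 v w) ↔
      ∀ i ∈ ({1, 2, 3} : Finset ℕ), (seqNth L i).Chain' (fun x y => y ≤ x) := by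
  show L.IsChain _ ↔ ∀ i ∈ _, (seqNth L i).IsChain _
  rw [List.isChain_iff_of_pairwise hsorted fun v hv w hw =>
    not_descent4_iff_nth_le (hletters v hv) (hletters w hw), List.isChain_forall_iff]
  refine forall₂_congr fun i _ => ?_
  have hfilter : L.Pairwise fun v w => decide (i ≤ v.card) → decide (i ≤ w.card) :=
    hsorted.imp fun hvw hv => by simpa using (of_decide_eq_true hv).trans hvw
  rw [seqNth, List.isChain_map, List.isChain_filter_iff hfilter]
  simp only [decide_eq_true_eq]
end

section
/- Every sorted lattice word over the r=4 alphabet with no descents has the form 1^p {1,2}^q 4̄^s for some p, q, s ≥ 0; that is, it consists of p copies of the letter {1}, followed by q copies of the letter {1,2}, followed by s copies of the letter 4̄ = {1,2,3}. -/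
/-- The coordinate `k` of the contribution vector in `ℤ⁴` of a letter: a letter of size
`1` or `2` contributes its indicator vector, and a barred letter `ā` (size `3`)
contributes `−e_a`. -/
def contrib4 (s : Finset ℕ) (k : ℕ) : ℤ :=
  if s.card ≤ 2 then (if k ∈ s then 1 else 0) else (if k ∈ U4 \ s then -1 else 0)

/-- Cumulative contribution of a word in coordinate `k`. -/
def cum4 (L : List (Finset ℕ)) (k : ℕ) : ℤ := (L.map fun s => contrib4 s k).sum

/-- A word is a lattice word if for every prefix the cumulative contribution
`(c₁, c₂, c₃, c₄)` satisfies `c₁ ≥ c₂ ≥ c₃ ≥ c₄`. -/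
def IsLatticeWord4 (L : List (Finset ℕ)) : Prop :=
  ∀ t : ℕ, ∀ k ∈ ({1, 2, 3} : Finset ℕ), cum4 (L.take t) (k + 1) ≤ cum4 (L.take t) k

/-!
Induct on the word from the right. The word `1^p {1,2}^q 4̄^s` has cumulative contribution
`(p + q, q, 0, -s)` and ends in `4̄`, `{1,2}` or `1` according as `s`, else `q`, else `p` is
positive. The next letter may not be smaller than that last letter, may not form a descent with
it, and must keep the lattice condition; checking the fourteen letters, only those that preserve
the shape survive.
-/

lemma cum4_append (M N : List (Finset ℕ)) (k : ℕ) : cum4 (M ++ N) k = cum4 M k + cum4 N k := by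
  simp [cum4]

lemma cum4_singleton (x : Finset ℕ) (k : ℕ) : cum4 [x] k = contrib4 x k := by
  simp [cum4]

lemma cum4_replicate (n : ℕ) (x : Finset ℕ) (k : ℕ) :
    cum4 (List.replicate n x) k = n * contrib4 x k := by
  simp [cum4]

lemma IsLatticeWord4.of_append {M N : List (Finset ℕ)} (h : IsLatticeWord4 (M ++ N)) :
    IsLatticeWord4 M := by
  intro t k hk
  have := h (min t M.length) k hk
  rwa [List.take_append_of_le_length (min_le_right _ _), ← List.take_eq_take_min] at this

lemma IsLatticeWord4.cum4_le {L : List (Finset ℕ)} (h : IsLatticeWord4 L) :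
    ∀ k ∈ ({1, 2, 3} : Finset ℕ), cum4 L (k + 1) ≤ cum4 L k := by
  simpa using h L.length

lemma IsLetter4.mem {x : Finset ℕ} (hx : IsLetter4 x) :
    x ∈ ({{1}, {2}, {3}, {4}, {1, 2}, {1, 3}, {1, 4}, {2, 3}, {2, 4}, {3, 4}, {2, 3, 4}, {1, 3, 4},
      {1, 2, 4}, {1, 2, 3}} : Finset (Finset ℕ)) := by
  obtain ⟨hsub, hne, hproper⟩ := hx
  have hmem : x ∈ U4.powerset := Finset.mem_powerset.2 hsub
  fin_cases hmem <;> revert hne hproper <;> decide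

lemma IsLetter4.eq_of_contrib4_antitone {x : Finset ℕ} (hx : IsLetter4 x)
    (hlat : ∀ k ∈ ({1, 2, 3} : Finset ℕ), contrib4 x (k + 1) ≤ contrib4 x k) :
    x = {1} ∨ x = {1, 2} ∨ x = {1, 2, 3} := by
  have hmem := hx.mem
  fin_cases hmem <;> revert hlat <;> decide

lemma IsLetter4.eq_of_not_descent4_one {x : Finset ℕ} (hx : IsLetter4 x)
    (hd : ¬ Descent4 {1} x) (hlat₂ : contrib4 x 3 ≤ contrib4 x 2)
    (hlat₃ : contrib4 x 4 ≤ contrib4 x 3) :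
    x = {1} ∨ x = {1, 2} ∨ x = {1, 2, 3} := by
  -- descent rules (1), (4) and (3)
  have h₂ : x ≠ {2} := by rintro rfl; exact hd (.inl ⟨1, 2, rfl, rfl, by decide⟩)
  have h₂₃ : x ≠ {2, 3} := by
    rintro rfl; exact hd (.inr <| .inr <| .inr <| .inl ⟨1, 2, 3, rfl, rfl, by decide, by decide⟩)
  have h₂₃₄ : x ≠ {2, 3, 4} := by rintro rfl; exact hd (.inr <| .inr <| .inl ⟨rfl, by decide⟩)
  have hmem := hx.mem
  fin_cases hmem <;> revert hlat₂ hlat₃ h₂ h₂₃ h₂₃₄ <;> decide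

lemma IsLetter4.eq_of_not_descent4_one_two {x : Finset ℕ} (hx : IsLetter4 x)
    (hcard : 2 ≤ x.card) (hd : ¬ Descent4 {1, 2} x) (hlat₃ : contrib4 x 4 ≤ contrib4 x 3) :
    x = {1, 2} ∨ x = {1, 2, 3} := by
  -- descent rules (6) and (5)
  have hpair : ∀ b₂ < 5, ∀ b₁ < b₂, (1 < b₁ ∨ 2 < b₂) → x ≠ {b₁, b₂} := by
    rintro b₂ - b₁ hb h rfl
    exact hd (.inr <| .inr <| .inr <| .inr <| .inr ⟨1, 2, b₁, b₂, rfl, by decide, rfl, hb, h⟩)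
  have hbar : ∀ c < 3, x ≠ U4 \ {c} := by
    rintro c hc rfl
    refine hd (.inr <| .inr <| .inr <| .inr <| .inl ⟨1, 2, c, rfl, by decide, rfl, ?_⟩)
    interval_cases c <;> decide
  have hmem := hx.mem
  fin_cases hmem <;> revert hcard hlat₃ hpair hbar <;> decide

lemma IsLetter4.eq_of_not_descent4_one_two_three {x : Finset ℕ} (hx : IsLetter4 x)
    (hcard : 3 ≤ x.card) (hd : ¬ Descent4 {1, 2, 3} x) : x = {1, 2, 3} := by
  -- descent rule (2)
  have hbar : ∀ b < 4, x ≠ U4 \ {b} := fun b hb hxb =>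
    hd (.inr <| .inl ⟨4, b, by decide, hxb, hb⟩)
  have hmem := hx.mem
  fin_cases hmem <;> revert hcard hbar <;> decide

def canonicalWord (p q s : ℕ) : List (Finset ℕ) :=
  List.replicate p {1} ++ List.replicate q {1, 2} ++ List.replicate s {1, 2, 3}

lemma canonicalWord_append_one (p : ℕ) :
    canonicalWord p 0 0 ++ [{1}] = canonicalWord (p + 1) 0 0 := by
  simp [canonicalWord, List.replicate_succ']

lemma canonicalWord_append_one_two (p q : ℕ) :
    canonicalWord p q 0 ++ [{1, 2}] = canonicalWord p (q + 1) 0 := by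
  simp [canonicalWord, List.replicate_succ']

lemma canonicalWord_append_one_two_three (p q s : ℕ) :
    canonicalWord p q s ++ [{1, 2, 3}] = canonicalWord p q (s + 1) := by
  simp [canonicalWord, List.replicate_succ']

lemma cum4_canonicalWord_two (p q s : ℕ) : cum4 (canonicalWord p q s) 2 = q := by
  simp [canonicalWord, cum4_append, cum4_replicate, contrib4, U4]

lemma cum4_canonicalWord_three (p q s : ℕ) : cum4 (canonicalWord p q s) 3 = 0 := by
  simp [canonicalWord, cum4_append, cum4_replicate, contrib4, U4]

lemma cum4_canonicalWord_four (p q s : ℕ) : cum4 (canonicalWord p q s) 4 = -s := by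
  simp [canonicalWord, cum4_append, cum4_replicate, contrib4, U4]

theorem exists_canonicalWord_append {p q s : ℕ} {x : Finset ℕ} (hx : IsLetter4 x)
    (hcard : ∀ a ∈ canonicalWord p q s, a.card ≤ x.card)
    (hd : ∀ a ∈ (canonicalWord p q s).getLast?, ¬ Descent4 a x)
    (hlat : ∀ k ∈ ({1, 2, 3} : Finset ℕ),
      cum4 (canonicalWord p q s ++ [x]) (k + 1) ≤ cum4 (canonicalWord p q s ++ [x]) k) :
    ∃ p' q' s', canonicalWord p q s ++ [x] = canonicalWord p' q' s' := by
  simp only [cum4_append, cum4_singleton] at hlat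
  cases s with
  | succ s =>
    rw [← canonicalWord_append_one_two_three] at hcard hd
    obtain rfl :=
      hx.eq_of_not_descent4_one_two_three (hcard {1, 2, 3} (by simp)) (by simpa using hd)
    exact ⟨p, q, s + 2, canonicalWord_append_one_two_three _ _ _⟩
  | zero =>
  cases q with
  | succ q =>
    rw [← canonicalWord_append_one_two] at hcard hd
    have hlat₃ := hlat 3 (by decide)
    rw [cum4_canonicalWord_three, cum4_canonicalWord_four] at hlat₃
    rcases hx.eq_of_not_descent4_one_two (hcard {1, 2} (by simp)) (by simpa using hd)
      (by simpa using hlat₃) with rfl | rfl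
    · exact ⟨p, q + 2, 0, canonicalWord_append_one_two _ _⟩
    · exact ⟨p, q + 1, 1, canonicalWord_append_one_two_three _ _ _⟩
  | zero =>
  have hx' : x = {1} ∨ x = {1, 2} ∨ x = {1, 2, 3} := by
    cases p with
    | zero => exact hx.eq_of_contrib4_antitone (by simpa [canonicalWord, cum4] using hlat)
    | succ p =>
      rw [← canonicalWord_append_one] at hd
      have hlat₂ := hlat 2 (by decide)
      have hlat₃ := hlat 3 (by decide)
      rw [cum4_canonicalWord_two, cum4_canonicalWord_three] at hlat₂
      rw [cum4_canonicalWord_three, cum4_canonicalWord_four] at hlat₃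
      exact hx.eq_of_not_descent4_one (by simpa using hd) (by simpa using hlat₂)
        (by simpa using hlat₃)
  rcases hx' with rfl | rfl | rfl
  · exact ⟨p + 1, 0, 0, canonicalWord_append_one p⟩
  · exact ⟨p, 1, 0, canonicalWord_append_one_two p 0⟩
  · exact ⟨p, 0, 1, canonicalWord_append_one_two_three p 0 0⟩

/-- every sorted lattice word over the `r = 4` alphabet with no descents has
the form `1^p {1,2}^q 4̄^s` (where `4̄ = {1,2,3}`). -/
theorem stmt2 (L : List (Finset ℕ)) (hletters : ∀ w ∈ L, IsLetter4 w)
    (hsorted : L.Pairwise fun v w => v.card ≤ w.card)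
    (hlattice : IsLatticeWord4 L)
    (hnodesc : L.Chain' fun v w => ¬ Descent4 v w) :
    ∃ p q s : ℕ,
      L = List.replicate p ({1} : Finset ℕ) ++ List.replicate q ({1, 2} : Finset ℕ)
            ++ List.replicate s ({1, 2, 3} : Finset ℕ) := by
  induction L using List.reverseRecOn with
  | nil => exact ⟨0, 0, 0, rfl⟩
  | append_singleton M x ih =>
    rw [List.pairwise_append] at hsorted
    obtain ⟨hchain, -, hlast⟩ := List.isChain_append.1 hnodesc
    obtain ⟨p, q, s, rfl⟩ := ih (fun w hw => hletters w (by simp [hw])) hsorted.1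
      hlattice.of_append hchain
    exact exists_canonicalWord_append (hletters x (by simp))
      (fun a ha => hsorted.2.2 a ha x (by simp)) (fun a ha => hlast a ha x (by simp))
      hlattice.cum4_le
end
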